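/- Let Σ be a transitive, invertible, two-sided subshift of finite type and let A : Σ → GL(d,ℝ) be a β-Hölder cocycle, and let μ > 0 satisfy ‖A(ω)‖ ≤ e^{μ} for all ω ∈ Σ. Suppose γ ∈ (0,1) and ε₀ > 0 satisfy μγ − β(1−γ) < −ε₀. Then there exists D > 0 such that for every ω ∈ Σ, every n ∈ ℕ, and every p ∈ Σ with p_i = ω_i for all |i| ≤ n, one has ‖A^{⌊γn⌋+1}(ω) − A^{⌊γn⌋+1}(p)‖ ≤ D·e^{−ε₀·n}. -/

import Mathlib

/-! For `j ≤ ⌊γn⌋` the points `σʲω` and `σʲp` still agree on `[-(n-j), n-j]`, so by Hölder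
continuity `‖A(σʲω) - A(σʲp)‖ ≤ C₀ e^{-β(1-γ)n}`. Telescoping the two products, each of the
`⌊γn⌋+1` differences is multiplied by partial products of norm at most `e^{μγn}`, giving
`(n+1) C₀ e^{(μγ-β(1-γ))n}`; the gap `δ = β(1-γ) - μγ - ε₀ > 0` absorbs the factor `n+1`. -/

open scoped Matrix.Norms.L2Operator

/-- Admissibility of a bi-infinite sequence with respect to the 0-1 transition matrix `Q`. -/
def Adm {m : ℕ} (Q : Fin m → Fin m → Bool) (ω : ℤ → Fin m) : Prop :=
  ∀ i : ℤ, Q (ω i) (ω (i + 1)) = true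

/-- Transitivity of `Q`: for every pair `(a, b)` there is an admissible path of some
length `ℓ ≥ 1` from `a` to `b` (i.e. `(Q^ℓ)_{ab} > 0`). -/
def QTransitive {m : ℕ} (Q : Fin m → Fin m → Bool) : Prop :=
  ∀ a b : Fin m, ∃ ℓ : ℕ, 1 ≤ ℓ ∧ ∃ w : ℕ → Fin m, w 0 = a ∧ w ℓ = b ∧
    ∀ i : ℕ, i < ℓ → Q (w i) (w (i + 1)) = true

/-- The two-sided subshift of finite type determined by `Q`. -/
def SFT {m : ℕ} (Q : Fin m → Fin m → Bool) : Type := {ω : ℤ → Fin m // Adm Q ω}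

/-- The left shift `(σω)_i = ω_{i+1}`. -/
def shift {m : ℕ} (Q : Fin m → Fin m → Bool) (ω : SFT Q) : SFT Q :=
  ⟨fun i => ω.1 (i + 1), fun i => ω.2 (i + 1)⟩

/-- `N(ω,η) = min {|n| : ω_n ≠ η_n}`. -/
noncomputable def sepIndex {m : ℕ} (ω η : ℤ → Fin m) : ℕ :=
  sInf {n : ℕ | ω (n : ℤ) ≠ η (n : ℤ) ∨ ω (-(n : ℤ)) ≠ η (-(n : ℤ))}

/-- The metric `d(ω,η) = e^{-N(ω,η)}` for `ω ≠ η`, and `d(ω,ω) = 0`. -/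
noncomputable def shiftDist {m : ℕ} {Q : Fin m → Fin m → Bool} (ω η : SFT Q) : ℝ :=
  haveI : Decidable (ω = η) := Classical.dec _
  if ω = η then 0 else Real.exp (-(sepIndex ω.1 η.1 : ℝ))

/-- Iterates `A^n(x) = A(f^{n-1}x) ⋯ A(fx) A(x)` of a matrix cocycle over a map `f`. -/
def cocycle {X : Type*} {d : ℕ} (A : X → Matrix (Fin d) (Fin d) ℝ) (f : X → X) :
    ℕ → X → Matrix (Fin d) (Fin d) ℝ
  | 0, _ => 1
  | n + 1, x => cocycle A f n (f x) * A x

/-- `A` is a `β`-Hölder `GL(d,ℝ)`-valued cocycle: each `A ω` is invertible and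
`‖A ω - A η‖ ≤ C₀ d(ω,η)^β` in the operator norm. -/
def IsHolderCocycle {m d : ℕ} {Q : Fin m → Fin m → Bool} (β : ℝ)
    (A : SFT Q → Matrix (Fin d) (Fin d) ℝ) : Prop :=
  (∀ ω, IsUnit (A ω)) ∧ ∃ C₀ : ℝ, 0 < C₀ ∧ ∀ ω η, ‖A ω - A η‖ ≤ C₀ * shiftDist ω η ^ β

/-- The multiset of moduli of the complex eigenvalues of `B`, with algebraic multiplicity. -/
noncomputable def eigModuli {d : ℕ} (B : Matrix (Fin d) (Fin d) ℝ) : Multiset ℝ :=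
  ((B.map (algebraMap ℝ ℂ)).charpoly.roots).map (fun z => ‖z‖)

/-- `A` has constant periodic data with exponents `lam 0 ≥ lam 1 ≥ ⋯`: for every periodic
point `p` of period `n`, the moduli of the eigenvalues of `A^n(p)`, with algebraic
multiplicity, are exactly `e^{n·lam 0}, …, e^{n·lam (d-1)}`. -/
def ConstPeriodicData {m d : ℕ} {Q : Fin m → Fin m → Bool}
    (A : SFT Q → Matrix (Fin d) (Fin d) ℝ) (lam : Fin d → ℝ) : Prop :=
  ∀ p : SFT Q, ∀ n : ℕ, 0 < n → (shift Q)^[n] p = p →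
    eigModuli (cocycle A (shift Q) n p) =
      Multiset.ofList (List.ofFn fun i => Real.exp (n * lam i))

/-- The action of a matrix on Euclidean space `ℝ^d`. -/
noncomputable def matVec {d : ℕ} (B : Matrix (Fin d) (Fin d) ℝ) :
    EuclideanSpace ℝ (Fin d) →ₗ[ℝ] EuclideanSpace ℝ (Fin d) :=
  Matrix.toEuclideanLin B

/-- A dominated splitting of index `k` for the cocycle `A` over the shift: an invariant
continuous splitting `E ⊕ F = ℝ^d` with `dim E = k` such that
`‖A^n(ω)|_F‖ ≤ C τ^n m(A^n(ω)|_E)`. -/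
def HasDominatedSplitting {m d : ℕ} (Q : Fin m → Fin m → Bool)
    (A : SFT Q → Matrix (Fin d) (Fin d) ℝ) (k : ℕ) : Prop :=
  ∃ E F : SFT Q → Submodule ℝ (EuclideanSpace ℝ (Fin d)),
    (∀ ω, E ω ⊓ F ω = ⊥) ∧ (∀ ω, E ω ⊔ F ω = ⊤) ∧
    (∀ ω, Module.finrank ℝ (E ω) = k) ∧
    (∀ ω, (E ω).map (matVec (A ω)) = E (shift Q ω)) ∧
    (∀ ω, (F ω).map (matVec (A ω)) = F (shift Q ω)) ∧
    (∃ P : SFT Q → EuclideanSpace ℝ (Fin d) →L[ℝ] EuclideanSpace ℝ (Fin d),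
      (∀ ω, ∀ v ∈ E ω, P ω v = v) ∧ (∀ ω, ∀ v ∈ F ω, P ω v = 0) ∧
      ∀ ε : ℝ, 0 < ε → ∃ δ : ℝ, 0 < δ ∧ ∀ ω η, shiftDist ω η < δ → ‖P ω - P η‖ ≤ ε) ∧
    ∃ C : ℝ, 0 < C ∧ ∃ τ : ℝ, τ ∈ Set.Ioo (0 : ℝ) 1 ∧
      ∀ ω, ∀ n : ℕ, ∀ v ∈ F ω, ∀ u ∈ E ω,
        ‖matVec (cocycle A (shift Q) n ω) v‖ * ‖u‖ ≤
          C * τ ^ n * (‖v‖ * ‖matVec (cocycle A (shift Q) n ω) u‖)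

section Cocycle

variable {X : Type*} {d : ℕ} (A : X → Matrix (Fin d) (Fin d) ℝ) (f : X → X) {c : ℝ}

theorem norm_cocycle_le (hA : ∀ x, ‖A x‖ ≤ c) (k : ℕ) (x : X) :
    ‖cocycle A f k x‖ ≤ c ^ k := by
  induction k generalizing x with
  | zero =>
    rw [cocycle, pow_zero, Matrix.cstar_norm_def, map_one]
    exact ContinuousLinearMap.norm_id_le
  | succ k ih => exact (norm_mul_le_of_le (ih (f x)) (hA x)).trans_eq (pow_succ c k).symm

theorem norm_cocycle_succ_sub_le (hA : ∀ x, ‖A x‖ ≤ c) {ε : ℝ} {k : ℕ} {x y : X}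
    (hxy : ∀ j ≤ k, ‖A (f^[j] x) - A (f^[j] y)‖ ≤ ε) :
    ‖cocycle A f (k + 1) x - cocycle A f (k + 1) y‖ ≤ (k + 1) * ε * c ^ k := by
  induction k generalizing x y with
  | zero => simpa [cocycle] using hxy 0 le_rfl
  | succ k ih =>
    have hhead : ‖A x - A y‖ ≤ ε := hxy 0 (Nat.zero_le _)
    have htail : ‖cocycle A f (k + 1) (f x) - cocycle A f (k + 1) (f y)‖ ≤ (k + 1) * ε * c ^ k :=
      ih fun j hj => by simpa only [Function.iterate_succ_apply] using hxy (j + 1) (by omega)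
    have hsplit : cocycle A f (k + 2) x - cocycle A f (k + 2) y =
        cocycle A f (k + 1) (f x) * (A x - A y) +
          (cocycle A f (k + 1) (f x) - cocycle A f (k + 1) (f y)) * A y := by
      simp only [cocycle, mul_sub, sub_mul]
      abel
    calc ‖cocycle A f (k + 2) x - cocycle A f (k + 2) y‖
        ≤ c ^ (k + 1) * ε + (k + 1) * ε * c ^ k * c := by
          rw [hsplit]
          exact (norm_add_le _ _).trans (add_le_add
            (norm_mul_le_of_le (norm_cocycle_le A f hA _ _) hhead)
            (norm_mul_le_of_le htail (hA y)))
      _ = ((k + 1 : ℕ) + 1) * ε * c ^ (k + 1) := by push_cast; ring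

end Cocycle

section Shift

variable {m : ℕ} {Q : Fin m → Fin m → Bool}

def SameCylinder (n : ℕ) (ω η : SFT Q) : Prop :=
  ∀ i : ℤ, |i| ≤ n → ω.1 i = η.1 i

theorem SameCylinder.symm {n : ℕ} {ω η : SFT Q} (h : SameCylinder n ω η) :
    SameCylinder n η ω :=
  fun i hi => (h i hi).symm

theorem iterate_shift_apply (ω : SFT Q) (j : ℕ) (i : ℤ) :
    ((shift Q)^[j] ω).1 i = ω.1 (i + j) := by
  induction j generalizing ω with
  | zero => simp
  | succ j ih =>
    rw [Function.iterate_succ_apply, ih]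
    exact congrArg ω.1 (by push_cast; ring)

theorem SameCylinder.iterate_shift {n N j : ℕ} {ω η : SFT Q} (h : SameCylinder n ω η)
    (hj : N + j ≤ n) : SameCylinder N ((shift Q)^[j] ω) ((shift Q)^[j] η) := by
  intro i hi
  rw [iterate_shift_apply, iterate_shift_apply]
  exact h _ ((abs_add_le _ _).trans (by simp only [Nat.abs_cast]; omega))

theorem shiftDist_nonneg (ω η : SFT Q) : 0 ≤ shiftDist ω η := by
  unfold shiftDist
  split_ifs
  exacts [le_rfl, (Real.exp_pos _).le]

theorem shiftDist_le_of_sameCylinder {n : ℕ} {ω η : SFT Q} (h : SameCylinder n ω η) :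
    shiftDist ω η ≤ Real.exp (-(n + 1)) := by
  unfold shiftDist
  split_ifs with hωη
  · exact (Real.exp_pos _).le
  obtain ⟨i, hi⟩ : ∃ i, ω.1 i ≠ η.1 i := by
    by_contra! hall
    exact hωη (Subtype.ext (funext hall))
  have hne : {k : ℕ | ω.1 k ≠ η.1 k ∨ ω.1 (-k) ≠ η.1 (-k)}.Nonempty := by
    refine ⟨i.natAbs, ?_⟩
    rcases Int.natAbs_eq i with hi' | hi' <;> rw [hi'] at hi
    exacts [Or.inl hi, Or.inr hi]
  have hsep : n + 1 ≤ sepIndex ω.1 η.1 := by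
    refine le_csInf hne fun k hk => ?_
    by_contra! hkn
    rcases hk with hk | hk <;> exact hk (h _ (by simp only [abs_neg, Nat.abs_cast]; omega))
  gcongr
  exact_mod_cast hsep

theorem norm_sub_le_of_sameCylinder {E : Type*} [SeminormedAddCommGroup E] {A : SFT Q → E}
    {β C₀ : ℝ} (hβ : 0 ≤ β) (hC₀ : 0 ≤ C₀)
    (hA : ∀ ω η, ‖A ω - A η‖ ≤ C₀ * shiftDist ω η ^ β) {n : ℕ} {ω η : SFT Q}
    (h : SameCylinder n ω η) : ‖A ω - A η‖ ≤ C₀ * Real.exp (-(β * (n + 1))) := by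
  refine (hA ω η).trans ?_
  gcongr
  calc shiftDist ω η ^ β ≤ Real.exp (-(n + 1)) ^ β := by
        gcongr
        exacts [shiftDist_nonneg ω η, shiftDist_le_of_sameCylinder h]
    _ = Real.exp (-(β * (n + 1))) := by rw [← Real.exp_mul]; ring_nf

end Shift

theorem add_one_mul_exp_neg_mul_le {δ : ℝ} (hδ : 0 < δ) (x : ℝ) :
    (x + 1) * Real.exp (-(δ * x)) ≤ Real.exp δ / δ := by
  have h : δ * (x + 1) ≤ Real.exp δ * Real.exp (δ * x) := by
    have := Real.add_one_le_exp (δ * (x + 1))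
    rw [mul_add_one, Real.exp_add, mul_comm (Real.exp _)] at this
    linarith
  rw [Real.exp_neg, ← div_eq_mul_inv, div_le_div_iff₀ (Real.exp_pos _) hδ]
  linarith

theorem cocycle_comparison_along_shadowing_general
    {m d : ℕ}
    (Q : Fin m → Fin m → Bool)
    (β : ℝ) (hβ : β ∈ Set.Ioc (0 : ℝ) 1)
    (A : SFT Q → Matrix (Fin d) (Fin d) ℝ) (hA : IsHolderCocycle β A)
    (μ : ℝ) (hμ : 0 < μ) (hbound : ∀ ω, ‖A ω‖ ≤ Real.exp μ)
    (γ : ℝ) (hγ : γ ∈ Set.Ioo (0 : ℝ) 1)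
    (ε₀ : ℝ)
    (hineq : μ * γ - β * (1 - γ) < -ε₀) :
    ∃ D : ℝ, 0 < D ∧ ∀ ω : SFT Q, ∀ n : ℕ, ∀ p : SFT Q,
      (∀ i : ℤ, |i| ≤ (n : ℤ) → p.1 i = ω.1 i) →
        ‖cocycle A (shift Q) (⌊γ * n⌋₊ + 1) ω - cocycle A (shift Q) (⌊γ * n⌋₊ + 1) p‖ ≤
          D * Real.exp (-ε₀ * n) := by
  obtain ⟨-, C₀, hC₀, hHolder⟩ := hA
  set δ := β * (1 - γ) - μ * γ - ε₀ with hδ_def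
  have hδ : 0 < δ := by linarith
  refine ⟨C₀ * (Real.exp δ / δ), by positivity, fun ω n p hpω => ?_⟩
  set k := ⌊γ * n⌋₊
  have hkγ : (k : ℝ) ≤ γ * n := Nat.floor_le (by positivity [hγ.1])
  have hkn : k ≤ n := by
    have : (k : ℝ) ≤ n := hkγ.trans (mul_le_of_le_one_left n.cast_nonneg hγ.2.le)
    exact_mod_cast this
  have hstep : ∀ j ≤ k, ‖A ((shift Q)^[j] ω) - A ((shift Q)^[j] p)‖ ≤
      C₀ * Real.exp (-(β * (1 - γ) * n)) := by
    intro j hj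
    have hcyl := (SameCylinder.symm hpω).iterate_shift (N := n - j) (j := j) (by omega)
    refine (norm_sub_le_of_sameCylinder hβ.1.le hC₀.le hHolder hcyl).trans ?_
    have hj' : (j : ℝ) ≤ γ * n := (Nat.cast_le.2 hj).trans hkγ
    rw [Nat.cast_sub (hj.trans hkn)]
    gcongr C₀ * Real.exp ?_
    nlinarith [hβ.1]
  calc _ ≤ (k + 1) * (C₀ * Real.exp (-(β * (1 - γ) * n))) * Real.exp μ ^ k :=
        norm_cocycle_succ_sub_le A (shift Q) hbound hstep
    _ ≤ (n + 1) * (C₀ * Real.exp (-(β * (1 - γ) * n))) * Real.exp (μ * γ * n) := by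
        have hexp : Real.exp μ ^ k ≤ Real.exp (μ * γ * n) := by
          rw [← Real.exp_nat_mul]
          exact Real.exp_le_exp.2 (by nlinarith)
        gcongr ?_ * _ * ?_
        exact_mod_cast Nat.succ_le_succ hkn
    _ = C₀ * ((n + 1) * Real.exp (-(δ * n))) * Real.exp (-ε₀ * n) := by
        have hexp : Real.exp (-(β * (1 - γ) * n)) * Real.exp (μ * γ * n) =
            Real.exp (-(δ * n)) * Real.exp (-ε₀ * n) := by
          rw [← Real.exp_add, ← Real.exp_add, hδ_def]
          ring_nf
        linear_combination ((n : ℝ) + 1) * C₀ * hexp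
    _ ≤ C₀ * (Real.exp δ / δ) * Real.exp (-ε₀ * n) := by
        gcongr
        exact add_one_mul_exp_neg_mul_le hδ n

/-- **Lemma (comparison of a cocycle along shadowing orbits).**
If `‖A(ω)‖ ≤ e^μ` for all `ω`, and `γ ∈ (0,1)`, `ε₀ > 0` satisfy
`μγ - β(1-γ) < -ε₀`, then there is `D > 0` such that whenever `p` agrees with `ω` on all
coordinates `|i| ≤ n`, one has `‖A^{⌊γn⌋+1}(ω) - A^{⌊γn⌋+1}(p)‖ ≤ D e^{-ε₀ n}`. -/
theorem cocycle_comparison_along_shadowing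
    {m d : ℕ} (hm : 1 ≤ m) (hd : 1 ≤ d)
    (Q : Fin m → Fin m → Bool) (hQ : QTransitive Q)
    (β : ℝ) (hβ : β ∈ Set.Ioc (0 : ℝ) 1)
    (A : SFT Q → Matrix (Fin d) (Fin d) ℝ) (hA : IsHolderCocycle β A)
    (μ : ℝ) (hμ : 0 < μ) (hbound : ∀ ω, ‖A ω‖ ≤ Real.exp μ)
    (γ : ℝ) (hγ : γ ∈ Set.Ioo (0 : ℝ) 1)
    (ε₀ : ℝ) (hε₀ : 0 < ε₀)
    (hineq : μ * γ - β * (1 - γ) < -ε₀) :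
    ∃ D : ℝ, 0 < D ∧ ∀ ω : SFT Q, ∀ n : ℕ, ∀ p : SFT Q,
      (∀ i : ℤ, |i| ≤ (n : ℤ) → p.1 i = ω.1 i) →
        ‖cocycle A (shift Q) (⌊γ * n⌋₊ + 1) ω - cocycle A (shift Q) (⌊γ * n⌋₊ + 1) p‖ ≤
          D * Real.exp (-ε₀ * n) :=
  cocycle_comparison_along_shadowing_general Q β hβ A hA μ hμ hbound γ hγ ε₀ hineq
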